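/- arXiv:math-ph/0108007 — 9 statements merged into one kernel-verified Lean document; each statement's English description precedes it below -/
import Mathlib

section
/- Let G be a simple graph on a countable vertex set V with all vertex degrees bounded by a constant M, let D = {(i,k) : i and k adjacent in G} be the set of directed edges, and let f : V → ℝ be a bounded function. Define T_f : ℓ²(V, ℝ) → ℓ²(D, ℝ) by (T_f x)(i,k) = (f(k) − f(i))·x(k). Then T_f is a bounded operator and its operator norm equals sup_{i ∈ V} ( Σ_{j adjacent to i} (f(j) − f(i))² )^{1/2}. (T_f is the commutator [D, f] of the graph Dirac operator with the multiplication operator by f, so this computes ‖[D, f]‖.) -/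
/-!
Grouping the directed edges `(i, k)` by their head `k` gives
`‖T_f x‖² = ∑_k w_k x_k²` with `w_k = ∑_{j ~ k} (f j - f k)²`, so `T_f` has the same norm as
multiplication by `√w_k`. Testing on basis vectors gives `√w_k ≤ ‖T_f‖`, and
`∑_k w_k x_k² ≤ (sup_k w_k) ‖x‖²` gives the reverse inequality.
-/

theorem lp.hasSum_sq_real {ι : Type*} (x : lp (fun _ : ι => ℝ) 2) :
    HasSum (fun i => x i ^ 2) (‖x‖ ^ 2) := by
  simpa [Real.norm_eq_abs, sq_abs] using lp.hasSum_norm (p := 2) (by norm_num) x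

namespace ContinuousLinearMap

variable {V E : Type*} [NormedAddCommGroup E] [NormedSpace ℝ E]
  {T : lp (fun _ : V => ℝ) 2 →L[ℝ] E} {w : V → ℝ}

theorem sq_norm_apply_single_of_hasSum [DecidableEq V]
    (hT : ∀ x, HasSum (fun k => w k * x k ^ 2) (‖T x‖ ^ 2)) (k : V) :
    ‖T (lp.single 2 k 1)‖ ^ 2 = w k := by
  refine (hT _).unique ?_
  convert hasSum_single (f := fun j => w j * (lp.single 2 k (1 : ℝ) : V → ℝ) j ^ 2) k
    fun j hj => ?_
  · simp
  · simp [hj]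

theorem sqrt_le_opNorm_of_hasSum
    (hT : ∀ x, HasSum (fun k => w k * x k ^ 2) (‖T x‖ ^ 2)) (k : V) :
    √(w k) ≤ ‖T‖ := by
  classical
  rw [← sq_norm_apply_single_of_hasSum hT k, Real.sqrt_sq (norm_nonneg _)]
  simpa [lp.norm_single] using T.le_opNorm (lp.single 2 k (1 : ℝ))

theorem opNorm_eq_iSup_sqrt_of_hasSum
    (hT : ∀ x, HasSum (fun k => w k * x k ^ 2) (‖T x‖ ^ 2)) :
    ‖T‖ = ⨆ k, √(w k) := by
  set C := ⨆ k, √(w k)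
  have hC : 0 ≤ C := Real.iSup_nonneg fun k => Real.sqrt_nonneg _
  have hbdd : BddAbove (Set.range fun k => √(w k)) :=
    ⟨‖T‖, Set.forall_mem_range.2 (sqrt_le_opNorm_of_hasSum hT)⟩
  have hw : ∀ k, w k ≤ C ^ 2 := fun k => by
    classical
    have hwk : 0 ≤ w k := sq_norm_apply_single_of_hasSum hT k ▸ sq_nonneg _
    rw [← Real.sq_sqrt hwk]
    exact pow_le_pow_left₀ (Real.sqrt_nonneg _) (le_ciSup hbdd k) 2
  refine le_antisymm (T.opNorm_le_bound hC fun x => ?_)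
    (Real.iSup_le (sqrt_le_opNorm_of_hasSum hT) (norm_nonneg _))
  refine (pow_le_pow_iff_left₀ (norm_nonneg _) (by positivity) two_ne_zero).1 ?_
  rw [mul_pow]
  exact hasSum_le (fun k => mul_le_mul_of_nonneg_right (hw k) (sq_nonneg _)) (hT x)
    ((lp.hasSum_sq_real x).mul_left _)

end ContinuousLinearMap

namespace SimpleGraph

variable {V : Type*} (G : SimpleGraph V)

def adjEquivSigmaNeighborSet : {e : V × V // G.Adj e.1 e.2} ≃ Σ k, G.neighborSet k where
  toFun e := ⟨e.1.2, e.1.1, e.2.symm⟩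
  invFun p := ⟨(p.2, p.1), p.2.2.symm⟩
  left_inv _ := rfl
  right_inv _ := rfl

theorem hasSum_sum_neighborFinset [∀ v, Fintype (G.neighborSet v)] {α : Type*}
    [AddCommMonoid α] [TopologicalSpace α] [ContinuousAdd α] [RegularSpace α]
    {φ : V → V → α} {a : α}
    (h : HasSum (fun e : {e : V × V // G.Adj e.1 e.2} => φ e.1.1 e.1.2) a) :
    HasSum (fun k => ∑ j ∈ G.neighborFinset k, φ j k) a := by
  refine ((G.adjEquivSigmaNeighborSet.symm.hasSum_iff).2 h).sigma fun k => ?_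
  convert hasSum_fintype _
  rw [neighborFinset_def, ← Finset.sum_set_coe]
  rfl

end SimpleGraph

theorem stmt_8_general {V : Type*} (G : SimpleGraph V)
    [∀ v, Fintype (G.neighborSet v)]
    (f : V → ℝ)
    (T : lp (fun _ : V => ℝ) 2 →L[ℝ] lp (fun _ : {e : V × V // G.Adj e.1 e.2} => ℝ) 2)
    (hT : ∀ (x : lp (fun _ : V => ℝ) 2) (e : {e : V × V // G.Adj e.1 e.2}),
      T x e = (f e.1.2 - f e.1.1) * x e.1.2) :
    ‖T‖ = ⨆ i : V, Real.sqrt (∑ j ∈ G.neighborFinset i, (f j - f i) ^ 2) := by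
  refine T.opNorm_eq_iSup_sqrt_of_hasSum fun x => ?_
  have hedges := lp.hasSum_sq_real (T x)
  simp only [hT, mul_pow] at hedges
  have hvertices := G.hasSum_sum_neighborFinset (φ := fun j k => (f k - f j) ^ 2 * x k ^ 2) hedges
  simp only [← Finset.sum_mul] at hvertices
  convert hvertices using 3 with k
  exact Finset.sum_congr rfl fun j _ => sub_sq_comm _ _

/-- For a simple graph with uniformly bounded degrees and a bounded function `f` on the
vertices, the commutator operator `T_f : ℓ²(V) → ℓ²(D)`, `(T_f x)(i,k) = (f k - f i) x k`
(with `D` the set of directed edges), is bounded with operator norm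
`‖T_f‖ = sup_i (∑_{j ~ i} (f j - f i)²)^{1/2}`. -/
theorem stmt_8 {V : Type*} [Countable V] (G : SimpleGraph V)
    [∀ v, Fintype (G.neighborSet v)] (M : ℕ) (hM : ∀ v, G.degree v ≤ M)
    (f : V → ℝ) (hf : ∃ C, ∀ v, |f v| ≤ C)
    (T : lp (fun _ : V => ℝ) 2 →L[ℝ] lp (fun _ : {e : V × V // G.Adj e.1 e.2} => ℝ) 2)
    (hT : ∀ (x : lp (fun _ : V => ℝ) 2) (e : {e : V × V // G.Adj e.1 e.2}),
      T x e = (f e.1.2 - f e.1.1) * x e.1.2) :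
    ‖T‖ = ⨆ i : V, Real.sqrt (∑ j ∈ G.neighborFinset i, (f j - f i) ^ 2) :=
  stmt_8_general G f T hT
end

section
/- Let G be a connected simple graph. Call a function f : V → ℝ admissible if for every vertex i one has Σ_{j adjacent to i} (f(j) − f(i))² ≤ 1, and define the Connes distance dist_C(n, n') as the supremum of |f(n') − f(n)| over all admissible functions f. Then for all vertices n, n' one has dist_C(n, n') ≤ d(n, n'), where d is the ordinary graph distance (the minimal length of a path joining n and n'). -/
/-- A vertex function `f` is admissible for `G` if `∑_{j ~ i} (f j - f i)² ≤ 1` at every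
vertex `i`. -/
def Admissible {V : Type*} (G : SimpleGraph V) [∀ v, Fintype (G.neighborSet v)]
    (f : V → ℝ) : Prop :=
  ∀ i : V, ∑ j ∈ G.neighborFinset i, (f j - f i) ^ 2 ≤ 1

/-- The Connes distance: the supremum of `|f n' - f n|` over admissible functions `f`. -/
noncomputable def distC {V : Type*} (G : SimpleGraph V) [∀ v, Fintype (G.neighborSet v)]
    (n n' : V) : ℝ :=
  sSup {r : ℝ | ∃ f : V → ℝ, Admissible G f ∧ r = |f n' - f n|}

lemma admissible_edge {V : Type*} (G : SimpleGraph V) [∀ v, Fintype (G.neighborSet v)]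
    {f : V → ℝ} (hf : Admissible G f) {i j : V} (h : G.Adj i j) :
    |f j - f i| ≤ 1 := by
  have hmem : j ∈ G.neighborFinset i := by
    simpa [SimpleGraph.mem_neighborFinset] using h
  have hle : (f j - f i) ^ 2 ≤ ∑ k ∈ G.neighborFinset i, (f k - f i) ^ 2 :=
    Finset.single_le_sum (f := fun k => (f k - f i) ^ 2) (fun k _ => sq_nonneg _) hmem
  have h1 : (f j - f i) ^ 2 ≤ 1 := hle.trans (hf i)
  nlinarith [abs_nonneg (f j - f i), sq_abs (f j - f i)]

lemma admissible_walk {V : Type*} (G : SimpleGraph V) [∀ v, Fintype (G.neighborSet v)]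
    {f : V → ℝ} (hf : Admissible G f) {a b : V} (p : G.Walk a b) :
    |f b - f a| ≤ (p.length : ℝ) := by
  induction p with
  | nil => simp
  | cons h q ih =>
      rename_i u v w
      have h1 := admissible_edge G hf h
      calc |f w - f u| ≤ |f w - f v| + |f v - f u| := abs_sub_le (f w) (f v) (f u)
        _ ≤ (q.length : ℝ) + 1 := add_le_add ih h1
        _ = ((SimpleGraph.Walk.cons h q).length : ℝ) := by
            push_cast [SimpleGraph.Walk.length_cons]; ring

/-- For a connected locally finite simple graph, the Connes distance is bounded by the
ordinary graph distance: `dist_C(n, n') ≤ d(n, n')`. -/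
theorem stmt_9 {V : Type*} (G : SimpleGraph V) [∀ v, Fintype (G.neighborSet v)]
    (hG : G.Connected) (n n' : V) :
    distC G n n' ≤ (G.dist n n' : ℝ) := by
  apply Real.sSup_le
  · rintro r ⟨f, hf, rfl⟩
    obtain ⟨p, hp⟩ := hG.exists_walk_length_eq_dist n n'
    have := admissible_walk G hf p
    rw [hp] at this
    exact this
  · positivity
end

section
/- Let G be a connected simple graph and let n, n' be vertices with graph distance d(n, n') ≥ 2. Then the Connes distance is strictly smaller than the graph distance: dist_C(n, n') < d(n, n'). (Indeed, on any minimal path joining n and n' there is a vertex incident with two consecutive path edges, and admissibility forbids both incident jumps from being equal to 1; this forces every admissible f to satisfy |f(n') − f(n)| ≤ d(n,n') − 2 + √2.) -/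
namespace Admissible

variable {V : Type*} {G : SimpleGraph V} [∀ v, Fintype (G.neighborSet v)] {f : V → ℝ}

lemma abs_sub_le_one (hf : Admissible G f) {i j : V} (hij : G.Adj i j) :
    |f j - f i| ≤ 1 := by
  rw [← sq_le_one_iff_abs_le_one]
  refine le_trans ?_ (hf i)
  exact Finset.single_le_sum (f := fun k ↦ (f k - f i) ^ 2) (fun _ _ ↦ sq_nonneg _)
    ((G.mem_neighborFinset i j).mpr hij)

lemma sq_add_sq_le_one (hf : Admissible G f) {i j k : V} (hij : G.Adj i j) (hik : G.Adj i k)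
    (hjk : j ≠ k) : (f j - f i) ^ 2 + (f k - f i) ^ 2 ≤ 1 := by
  classical
  have hsub : ({j, k} : Finset V) ⊆ G.neighborFinset i := by
    simp [Finset.insert_subset_iff, hij, hik]
  calc (f j - f i) ^ 2 + (f k - f i) ^ 2 = ∑ l ∈ {j, k}, (f l - f i) ^ 2 :=
        (Finset.sum_pair (f := fun l ↦ (f l - f i) ^ 2) hjk).symm
    _ ≤ ∑ l ∈ G.neighborFinset i, (f l - f i) ^ 2 :=
        Finset.sum_le_sum_of_subset_of_nonneg hsub fun _ _ _ ↦ sq_nonneg _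
    _ ≤ 1 := hf i

lemma abs_add_abs_le_sqrt_two (hf : Admissible G f) {i j k : V} (hij : G.Adj i j)
    (hik : G.Adj i k) (hjk : j ≠ k) : |f j - f i| + |f k - f i| ≤ √2 := by
  have h := hf.sq_add_sq_le_one hij hik hjk
  have hsq : (|f j - f i| + |f k - f i|) ^ 2 ≤ 2 := by
    nlinarith [sq_nonneg (|f j - f i| - |f k - f i|), sq_abs (f j - f i), sq_abs (f k - f i)]
  exact (le_abs_self _).trans (Real.abs_le_sqrt hsq)

lemma abs_sub_le_length (hf : Admissible G f) {a b : V} (p : G.Walk a b) :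
    |f b - f a| ≤ p.length := by
  induction p with
  | nil => simp
  | @cons u v w huv q ih =>
    calc |f w - f u| ≤ |f w - f v| + |f v - f u| := abs_sub_le _ _ _
      _ ≤ q.length + 1 := add_le_add ih (hf.abs_sub_le_one huv)
      _ = (q.cons huv).length := by rw [SimpleGraph.Walk.length_cons]; push_cast; rfl

lemma abs_sub_le_length_sub_two_add_sqrt_two (hf : Admissible G f) {a b : V}
    (p : G.Walk a b) (hp : p.length = G.dist a b) (h2 : 2 ≤ p.length) :
    |f b - f a| ≤ p.length - 2 + √2 := by
  match p, hp, h2 with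
  | .cons (v := v₁) h₁ (.cons (v := v₂) h₂ q), hp, _ =>
    have hne : a ≠ v₂ := by
      rintro rfl
      have := SimpleGraph.dist_le q
      simp only [SimpleGraph.Walk.length_cons] at hp
      omega
    have hfirst := hf.abs_add_abs_le_sqrt_two h₁.symm h₂ hne
    have hrest := hf.abs_sub_le_length q
    have htri₁ := abs_sub_le (f b) (f v₂) (f a)
    have htri₂ := abs_sub_le (f v₂) (f v₁) (f a)
    have hswap := abs_sub_comm (f v₁) (f a)
    simp only [SimpleGraph.Walk.length_cons]
    push_cast
    linarith

end Admissible

lemma distC_le {V : Type*} {G : SimpleGraph V} [∀ v, Fintype (G.neighborSet v)] {n n' : V}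
    {c : ℝ} (hc : 0 ≤ c) (hbound : ∀ f, Admissible G f → |f n' - f n| ≤ c) :
    distC G n n' ≤ c :=
  Real.sSup_le (by rintro _ ⟨f, hf, rfl⟩; exact hbound f hf) hc

theorem stmt_11_general {V : Type*} (G : SimpleGraph V) [∀ v, Fintype (G.neighborSet v)]
    (n n' : V) (h : 2 ≤ G.dist n n') :
    distC G n n' < (G.dist n n' : ℝ) := by
  obtain ⟨p, hp⟩ := SimpleGraph.exists_walk_of_dist_ne_zero (by omega : G.dist n n' ≠ 0)
  have hp2 : 2 ≤ p.length := hp ▸ h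
  have hp2' : (2 : ℝ) ≤ p.length := by exact_mod_cast hp2
  have hsqrt := Real.sqrt_two_lt_three_halves
  calc distC G n n' ≤ p.length - 2 + √2 :=
        distC_le (by linarith [Real.sqrt_nonneg 2]) fun f hf ↦ hf.abs_sub_le_length_sub_two_add_sqrt_two p hp hp2
    _ < G.dist n n' := by rw [hp]; linarith

/-- In a connected locally finite simple graph, for vertices at graph distance at least `2`
the Connes distance is strictly smaller than the graph distance. -/
theorem stmt_11 {V : Type*} (G : SimpleGraph V) [∀ v, Fintype (G.neighborSet v)]
    (hG : G.Connected) (n n' : V) (h : 2 ≤ G.dist n n') :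
    distC G n n' < (G.dist n n' : ℝ) :=
  stmt_11_general G n n' h
end

section
/- Let G' be a connected simple graph and let G₀ be a subgraph of G' with vertex set V₀ such that every path in G' whose two endpoints both lie in V₀ has all of its vertices and edges in G₀ (adding the nodes and bonds of G' to G₀ creates no new paths between nodes of G₀). Then for all n₀, n₀' ∈ V₀ that are joined by a path inside G₀, the Connes distances agree: dist_C(n₀, n₀'; G₀) = dist_C(n₀, n₀'; G'). (Under this assumption every admissible function on G₀ extends to an admissible function on G'.) -/
/-!
Call `u ∈ V₀` an attachment vertex of `x` if some walk from `x` meets `V₀` only at `u`. Every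
vertex has one (walk towards `V₀`), and it is unique: two of them, `u ≠ u'`, would give a walk
`u → x → u'` meeting `V₀` only at `u, u'`, whose underlying path lies in `G₀` by hypothesis, so
is the single edge `u u'`, which one of the two walks would then have used before reaching its
end. Sending every vertex to its attachment vertex is a retraction `r : V → V₀` which is constant
along every edge of `G'` outside `G₀`, so `f ↦ f ∘ r` extends `G₀`-admissible functions to
`G'`-admissible ones, while restriction maps `G'`-admissible functions to `G₀`-admissible ones.
Hence both suprema run over the same set of values.
-/

open SimpleGraph

namespace SimpleGraph.Subgraph

variable {V : Type*} {G : SimpleGraph V} (H : G.Subgraph)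

def PathClosed : Prop :=
  ∀ (u v : V), u ∈ H.verts → v ∈ H.verts → ∀ w : G.Walk u v, w.IsPath →
    (∀ x ∈ w.support, x ∈ H.verts) ∧ (∀ e ∈ w.edges, e ∈ H.edgeSet)

def IsAttachment (x u : V) : Prop :=
  u ∈ H.verts ∧ ∃ p : G.Walk x u, ∀ y ∈ p.support, y ∈ H.verts → y = u

variable {H}

theorem PathClosed.isInduced (hH : H.PathClosed) : H.IsInduced := by
  intro u hu v hv huv
  have hp : (Walk.cons huv Walk.nil).IsPath := by simp [Walk.isPath_def, huv.ne]
  exact (hH u v hu hv _ hp).2 s(u, v) (by simp)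

theorem isAttachment_self {x : V} (hx : x ∈ H.verts) : H.IsAttachment x x :=
  ⟨hx, Walk.nil, by simp⟩

theorem IsAttachment.of_adj {x y u : V} (hx : x ∉ H.verts) (hxy : G.Adj x y)
    (hy : H.IsAttachment y u) : H.IsAttachment x u := by
  obtain ⟨hu, p, hp⟩ := hy
  refine ⟨hu, Walk.cons hxy p, fun z hz hzH => ?_⟩
  rcases List.mem_cons.1 (Walk.support_cons hxy p ▸ hz) with rfl | hz
  · exact absurd hzH hx
  · exact hp z hz hzH

theorem exists_isAttachment {x z : V} (w : G.Walk x z) (hz : z ∈ H.verts) :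
    ∃ u, H.IsAttachment x u := by
  induction w with
  | nil => exact ⟨_, isAttachment_self hz⟩
  | @cons a b c hab w ih =>
    by_cases ha : a ∈ H.verts
    · exact ⟨a, isAttachment_self ha⟩
    · obtain ⟨u, hu⟩ := ih hz
      exact ⟨u, hu.of_adj ha hab⟩

theorem PathClosed.isAttachment_unique (hH : H.PathClosed) {x u u' : V}
    (hu : H.IsAttachment x u) (hu' : H.IsAttachment x u') : u = u' := by
  classical
  obtain ⟨huH, p, hp⟩ := hu
  obtain ⟨hu'H, q, hq⟩ := hu'
  by_contra hne
  let w : G.Walk u u' := p.reverse.append q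
  have hw : ∀ y ∈ w.support, y ∈ H.verts → y = u ∨ y = u' := by
    intro y hy hyH
    rcases (Walk.mem_support_append_iff _ _).1 hy with hy | hy
    · exact Or.inl (hp y (by simpa using hy) hyH)
    · exact Or.inr (hq y hy hyH)
  have hnil : ¬w.bypass.Nil := Walk.not_nil_of_ne hne
  have hsnd : w.bypass.snd = u' := by
    have hmem := Walk.snd_mem_support_of_mem_edges _ (Walk.mk_start_snd_mem_edges hnil)
    refine (hw _ (w.support_bypass_subset hmem)
      ((hH u u' huH hu'H _ w.bypass_isPath).1 _ hmem)).resolve_left ?_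
    exact (Walk.adj_snd hnil).ne.symm
  have hedge : s(u, u') ∈ w.edges := by
    have := Walk.mk_start_snd_mem_edges hnil
    rw [hsnd] at this
    exact w.edges_bypass_subset_edges this
  rcases List.mem_append.1 (Walk.edges_append _ _ ▸ hedge) with he | he
  · exact hne (hp u' (by simpa using p.reverse.snd_mem_support_of_mem_edges he) hu'H).symm
  · exact hne (hq u (q.fst_mem_support_of_mem_edges he) huH)

theorem PathClosed.exists_retraction (hH : H.PathClosed) (hG : G.Connected) {z : V}
    (hz : z ∈ H.verts) :
    ∃ r : V → H.verts, (∀ x : H.verts, r x = x) ∧ ∀ i j, G.Adj i j → r i = r j ∨ H.Adj i j := by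
  choose a ha using fun x => exists_isAttachment (hG x z).some hz
  have ha_self {x : V} (hx : x ∈ H.verts) : a x = x :=
    hH.isAttachment_unique (ha x) (isAttachment_self hx)
  have ha_adj {i j : V} (hi : i ∉ H.verts) (hij : G.Adj i j) : a i = a j :=
    hH.isAttachment_unique (ha i) ((ha j).of_adj hi hij)
  refine ⟨fun x => ⟨a x, (ha x).1⟩, fun x => Subtype.ext (ha_self x.2), fun i j hij => ?_⟩
  by_cases hi : i ∈ H.verts
  · by_cases hj : j ∈ H.verts
    · exact Or.inr (hH.isInduced hi hj hij)
    · exact Or.inl (Subtype.ext (ha_self hi ▸ (ha_adj hj hij.symm).symm))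
  · exact Or.inl (Subtype.ext (ha_adj hi hij))

theorem sum_coe_neighborFinset {M : Type*} [AddCommMonoid M] [∀ v, Fintype (G.neighborSet v)]
    [∀ v : H.verts, Fintype (H.coe.neighborSet v)] [DecidableRel H.Adj] (i : H.verts)
    (g : V → M) :
    ∑ j ∈ H.coe.neighborFinset i, g j = ∑ j ∈ G.neighborFinset i with H.Adj i j, g j := by
  have hfilter : {j ∈ G.neighborFinset i | H.Adj i j} =
      (H.coe.neighborFinset i).map (Function.Embedding.subtype _) := by
    ext j
    simp only [Finset.mem_filter, mem_neighborFinset, Finset.mem_map,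
      Function.Embedding.coe_subtype]
    constructor
    · rintro ⟨-, hij⟩
      exact ⟨⟨j, H.edge_vert hij.symm⟩, hij, rfl⟩
    · rintro ⟨j, hij, rfl⟩
      exact ⟨H.adj_sub hij, hij⟩
  rw [hfilter, Finset.sum_map]
  rfl

end SimpleGraph.Subgraph

namespace Admissible

variable {V : Type*} {G : SimpleGraph V} [∀ v, Fintype (G.neighborSet v)] {H : G.Subgraph}
  [∀ v : H.verts, Fintype (H.coe.neighborSet v)]

theorem restrict {f : V → ℝ} (hf : Admissible G f) : Admissible H.coe (fun x => f x) := by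
  classical
  intro i
  calc ∑ j ∈ H.coe.neighborFinset i, (f j - f i) ^ 2
      = ∑ j ∈ G.neighborFinset i with H.Adj i j, (f j - f i) ^ 2 :=
        Subgraph.sum_coe_neighborFinset i (fun j => (f j - f i) ^ 2)
    _ ≤ ∑ j ∈ G.neighborFinset i, (f j - f i) ^ 2 :=
        Finset.sum_le_sum_of_subset_of_nonneg (Finset.filter_subset _ _)
          (fun _ _ _ => sq_nonneg _)
    _ ≤ 1 := hf i

theorem comp_retraction {f : H.verts → ℝ} (hf : Admissible H.coe f) {r : V → H.verts}
    (hr : ∀ x : H.verts, r x = x) (hr_adj : ∀ i j, G.Adj i j → r i = r j ∨ H.Adj i j) :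
    Admissible G (f ∘ r) := by
  classical
  intro i
  have hoff : ∀ j ∈ G.neighborFinset i, (f (r j) - f (r i)) ^ 2 ≠ 0 → H.Adj i j := by
    intro j hj hne
    refine (hr_adj i j ((mem_neighborFinset ..).1 hj)).resolve_left fun h => hne ?_
    simp [h]
  rw [Function.comp_def, ← Finset.sum_filter_of_ne hoff]
  by_cases hi : i ∈ H.verts
  · rw [show r i = ⟨i, hi⟩ from hr ⟨i, hi⟩]
    calc ∑ j ∈ G.neighborFinset i with H.Adj i j, (f (r j) - f ⟨i, hi⟩) ^ 2
        = ∑ j ∈ H.coe.neighborFinset ⟨i, hi⟩, (f (r j) - f ⟨i, hi⟩) ^ 2 :=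
          (Subgraph.sum_coe_neighborFinset ⟨i, hi⟩ fun j => (f (r j) - f ⟨i, hi⟩) ^ 2).symm
      _ ≤ 1 := by simpa only [hr] using hf ⟨i, hi⟩
  · rw [Finset.filter_false_of_mem fun j _ h => hi (H.edge_vert h), Finset.sum_empty]
    exact zero_le_one

end Admissible

/-- If `G₀` is a subgraph of a connected graph `G'` such that every path of `G'` with both
endpoints in `G₀` has all its vertices and edges in `G₀`, then the Connes distances computed
in `G₀` and in `G'` agree for vertices of `G₀` joined by a path inside `G₀`. -/
theorem stmt_13 {V : Type*} (G' : SimpleGraph V) [∀ v, Fintype (G'.neighborSet v)]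
    (hG' : G'.Connected) (G₀ : G'.Subgraph)
    [∀ v : G₀.verts, Fintype (G₀.coe.neighborSet v)]
    (hpath : ∀ (u v : V), u ∈ G₀.verts → v ∈ G₀.verts →
      ∀ w : G'.Walk u v, w.IsPath →
        (∀ x ∈ w.support, x ∈ G₀.verts) ∧ (∀ e ∈ w.edges, e ∈ G₀.edgeSet))
    (n₀ n₀' : V) (hn₀ : n₀ ∈ G₀.verts) (hn₀' : n₀' ∈ G₀.verts)
    (hreach : G₀.coe.Reachable ⟨n₀, hn₀⟩ ⟨n₀', hn₀'⟩) :
    distC G₀.coe ⟨n₀, hn₀⟩ ⟨n₀', hn₀'⟩ = distC G' n₀ n₀' := by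
  obtain ⟨r, hr, hr_adj⟩ := Subgraph.PathClosed.exists_retraction hpath hG' hn₀
  have hvalues : {s : ℝ | ∃ f : G₀.verts → ℝ, Admissible G₀.coe f ∧
        s = |f ⟨n₀', hn₀'⟩ - f ⟨n₀, hn₀⟩|}
      = {s : ℝ | ∃ f : V → ℝ, Admissible G' f ∧ s = |f n₀' - f n₀|} := by
    ext s
    constructor
    · rintro ⟨f, hf, rfl⟩
      exact ⟨f ∘ r, hf.comp_retraction hr hr_adj, by
        simp only [Function.comp_apply, ← hr ⟨n₀', hn₀'⟩, ← hr ⟨n₀, hn₀⟩]⟩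
    · rintro ⟨f, hf, rfl⟩
      exact ⟨_, hf.restrict, rfl⟩
  exact congrArg sSup hvalues
end

section
/- Let G be a tree, i.e. a connected acyclic simple graph, and let n, n' be two vertices of G. Let P be the subgraph of G formed by the vertices and edges of the (unique) path in G joining n and n'. Then dist_C(n, n'; G) = dist_C(n, n'; P): the Connes distance in the whole tree equals the Connes distance computed in the minimal path joining the two vertices. -/
/-!
If `H` is a connected subgraph of a forest `G`, deleting the edges of `H` from `G`
leaves components each meeting `H` in at most one vertex (two such vertices would be joined by
two different paths). Sending every vertex to the vertex of `H` in its component gives a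
retraction `r : V → H.verts` that is constant along every edge of `G` outside `H`. Hence
`f ↦ f ∘ r` maps `H`-admissible functions to `G`-admissible ones with the same values on `H`,
while restriction maps `G`-admissible functions to `H`-admissible ones; so both suprema range
over the same set. The path from `n` to `n'` is such a connected subgraph.
-/

section

variable {V : Type*} {G : SimpleGraph V}

namespace SimpleGraph

theorem IsAcyclic.eq_of_reachable_deleteEdges (hG : G.IsAcyclic) {H : G.Subgraph}
    (hH : H.Connected) {u v : H.verts} (h : (G.deleteEdges H.edgeSet).Reachable u v) :
    u = v := by
  classical
  by_contra hne
  obtain ⟨q, hq⟩ := h.exists_isPath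
  obtain ⟨r⟩ := hH u v
  let inside : G.Path u v := ⟨(r.map H.hom).bypass, Walk.bypass_isPath _⟩
  let outside : G.Path u v := ⟨q.mapLe (G.deleteEdges_le _), hq.mapLe _⟩
  obtain ⟨e, he⟩ := List.exists_mem_of_ne_nil _
    (Walk.edges_eq_nil.not.2 (Walk.not_nil_of_ne (Subtype.coe_injective.ne hne)) :
      inside.1.edges ≠ [])
  have he_in : e ∈ H.edgeSet := by
    obtain ⟨e', he', rfl⟩ :=
      List.mem_map.1 (Walk.edges_map _ _ ▸ Walk.edges_bypass_subset_edges _ he)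
    simpa using r.edges_subset_edgeSet he'
  have he_out : e ∉ H.edgeSet := by
    rw [(hG.subsingleton_path u v).elim inside outside, Walk.edges_mapLe_eq_edges] at he
    exact ((edgeSet_deleteEdges _).le (q.edges_subset_edgeSet he)).2
  exact he_out he_in

theorem IsAcyclic.exists_retraction (hG : G.IsAcyclic) {H : G.Subgraph} (hH : H.Connected) :
    ∃ r : V → H.verts,
      (∀ u : H.verts, r u = u) ∧ ∀ v w, G.Adj v w → H.Adj v w ∨ r v = r w := by
  classical
  set G' := G.deleteEdges H.edgeSet
  obtain ⟨u₀, hu₀⟩ := hH.nonempty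
  let ρ : G'.ConnectedComponent → H.verts := fun C =>
    if h : ∃ u : H.verts, G'.connectedComponentMk u = C then h.choose else ⟨u₀, hu₀⟩
  refine ⟨fun v => ρ (G'.connectedComponentMk v), fun u => ?_, fun v w hvw => ?_⟩
  · have h : ∃ u' : H.verts, G'.connectedComponentMk u' = G'.connectedComponentMk u :=
      ⟨u, rfl⟩
    simp only [ρ, dif_pos h]
    exact hG.eq_of_reachable_deleteEdges hH (ConnectedComponent.exact h.choose_spec)
  · refine or_iff_not_imp_left.2 fun hvwH => ?_
    show ρ _ = ρ _
    rw [ConnectedComponent.sound (deleteEdges_adj.2 ⟨hvw, mt H.mem_edgeSet.1 hvwH⟩).reachable]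

theorem Subgraph.map_neighborFinset_coe_subset [∀ v, Fintype (G.neighborSet v)] {H : G.Subgraph}
    [∀ v : H.verts, Fintype (H.coe.neighborSet v)] (v : H.verts) :
    (H.coe.neighborFinset v).map (Function.Embedding.subtype _) ⊆ G.neighborFinset v := by
  intro w hw
  simp only [Finset.mem_map, mem_neighborFinset, Subgraph.coe_adj] at hw ⊢
  obtain ⟨w, hw, rfl⟩ := hw
  exact H.adj_sub hw

end SimpleGraph

variable [∀ v, Fintype (G.neighborSet v)] {H : G.Subgraph}
  [∀ v : H.verts, Fintype (H.coe.neighborSet v)]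

theorem Admissible.comp_val {f : V → ℝ} (hf : Admissible G f) :
    Admissible H.coe (f ∘ Subtype.val) := fun i => calc
  ∑ j ∈ H.coe.neighborFinset i, ((f ∘ Subtype.val) j - (f ∘ Subtype.val) i) ^ 2
      = ∑ j ∈ (H.coe.neighborFinset i).map (Function.Embedding.subtype _), (f j - f i) ^ 2 := by
    rw [Finset.sum_map]; rfl
  _ ≤ ∑ j ∈ G.neighborFinset i, (f j - f i) ^ 2 :=
    Finset.sum_le_sum_of_subset_of_nonneg (H.map_neighborFinset_coe_subset i)
      fun _ _ _ => sq_nonneg _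
  _ ≤ 1 := hf i

theorem Admissible.comp_retraction_s14 {r : V → H.verts} (hr : ∀ u : H.verts, r u = u)
    (hGH : ∀ v w, G.Adj v w → H.Adj v w ∨ r v = r w) {f : H.verts → ℝ}
    (hf : Admissible H.coe f) : Admissible G (f ∘ r) := by
  intro i
  by_cases hi : i ∈ H.verts
  · lift i to H.verts using hi
    calc ∑ j ∈ G.neighborFinset i, ((f ∘ r) j - (f ∘ r) i) ^ 2
        = ∑ j ∈ (H.coe.neighborFinset i).map (Function.Embedding.subtype _),
            ((f ∘ r) j - (f ∘ r) i) ^ 2 := by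
          refine (Finset.sum_subset (H.map_neighborFinset_coe_subset i) fun j hj hjH => ?_).symm
          obtain hij | hij := hGH i j ((G.mem_neighborFinset _ _).1 hj)
          · refine (hjH <| Finset.mem_map.2 ⟨⟨j, H.edge_vert hij.symm⟩, ?_, rfl⟩).elim
            simpa using hij
          · simp [hij]
      _ = ∑ j ∈ H.coe.neighborFinset i, (f j - f i) ^ 2 := by simp [Finset.sum_map, hr]
      _ ≤ 1 := hf i
  · refine (Finset.sum_eq_zero fun j hj => ?_).trans_le zero_le_one
    obtain hij | hij := hGH i j ((G.mem_neighborFinset _ _).1 hj)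
    · exact absurd (H.edge_vert hij) hi
    · simp [hij]

theorem distC_eq_of_retraction {r : V → H.verts} (hr : ∀ u : H.verts, r u = u)
    (hGH : ∀ v w, G.Adj v w → H.Adj v w ∨ r v = r w) {n n' : V} (hn : n ∈ H.verts)
    (hn' : n' ∈ H.verts) : distC G n n' = distC H.coe ⟨n, hn⟩ ⟨n', hn'⟩ := by
  unfold distC
  congr 1
  ext x
  constructor
  · rintro ⟨f, hf, rfl⟩
    exact ⟨_, hf.comp_val, rfl⟩
  · rintro ⟨f, hf, rfl⟩
    refine ⟨_, hf.comp_retraction_s14 hr hGH, ?_⟩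
    simp [hr ⟨n, hn⟩, hr ⟨n', hn'⟩]

theorem SimpleGraph.IsAcyclic.distC_eq_of_connected (hG : G.IsAcyclic) (hH : H.Connected)
    {n n' : V} (hn : n ∈ H.verts) (hn' : n' ∈ H.verts) :
    distC G n n' = distC H.coe ⟨n, hn⟩ ⟨n', hn'⟩ :=
  have ⟨_, hr, hGH⟩ := hG.exists_retraction hH
  distC_eq_of_retraction hr hGH hn hn'

end

/-- In a tree, the Connes distance between two vertices equals the Connes distance computed
in the subgraph formed by the (unique) path joining them. -/
theorem stmt_14 {V : Type*} (G : SimpleGraph V) [∀ v, Fintype (G.neighborSet v)]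
    (hG : G.IsTree) (n n' : V) (p : G.Walk n n') (hp : p.IsPath)
    [∀ v : p.toSubgraph.verts, Fintype (p.toSubgraph.coe.neighborSet v)]
    (hn : n ∈ p.toSubgraph.verts) (hn' : n' ∈ p.toSubgraph.verts) :
    distC G n n' = distC p.toSubgraph.coe ⟨n, hn⟩ ⟨n', hn'⟩ :=
  hG.isAcyclic.distC_eq_of_connected p.toSubgraph_connected hn hn'
end

section
/- Let G be the cycle graph on four vertices x₁, x₂, x₃, x₄ with edges x₁x₂, x₂x₃, x₃x₄, x₄x₁. Then the Connes distance between the two opposite vertices x₁ and x₃ equals √2, i.e. dist_C(x₁, x₃) = √2, which is strictly smaller than the graph distance d(x₁, x₃) = 2. -/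
lemma nbh (v : Fin 4) : (SimpleGraph.cycleGraph 4).neighborFinset v = {v - 1, v + 1} := by
  ext j
  rw [SimpleGraph.mem_neighborFinset]
  fin_cases v <;> fin_cases j <;> simp <;> decide

lemma bound_aux (f : Fin 4 → ℝ) (h : Admissible (SimpleGraph.cycleGraph 4) f) :
    |f 2 - f 0| ≤ Real.sqrt 2 := by
  have h1 := h 1
  rw [nbh, show ((1:Fin 4) - 1 : Fin 4) = 0 by decide, show ((1:Fin 4) + 1 : Fin 4) = 2 by decide,
    Finset.sum_pair (by decide : (0 : Fin 4) ≠ 2)] at h1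
  have hs : Real.sqrt 2 ^ 2 = 2 := Real.sq_sqrt (by norm_num)
  have hs0 : (0:ℝ) ≤ Real.sqrt 2 := Real.sqrt_nonneg 2
  rw [abs_le]
  constructor <;>
    nlinarith [sq_nonneg (f 0 - f 1 - (f 2 - f 1)), sq_nonneg (f 0 - f 1 + (f 2 - f 1)),
      sq_nonneg (f 2 - f 0 - Real.sqrt 2), sq_nonneg (f 2 - f 0 + Real.sqrt 2)]

lemma mem_aux : Real.sqrt 2 ∈ {r : ℝ | ∃ f : Fin 4 → ℝ,
    Admissible (SimpleGraph.cycleGraph 4) f ∧ r = |f 2 - f 0|} := by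
  set s := Real.sqrt 2 with hsdef
  have hs : s ^ 2 = 2 := Real.sq_sqrt (by norm_num)
  refine ⟨![0, s / 2, s, s / 2], ?_, ?_⟩
  · have g0 : (![0, s / 2, s, s / 2] : Fin 4 → ℝ) 0 = 0 := rfl
    have g1 : (![0, s / 2, s, s / 2] : Fin 4 → ℝ) 1 = s / 2 := rfl
    have g2 : (![0, s / 2, s, s / 2] : Fin 4 → ℝ) 2 = s := rfl
    have g3 : (![0, s / 2, s, s / 2] : Fin 4 → ℝ) 3 = s / 2 := rfl
    intro i
    rw [nbh]
    fin_cases i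
    · show ∑ j ∈ ({3, 1} : Finset (Fin 4)),
        ((![0, s / 2, s, s / 2] : Fin 4 → ℝ) j - (![0, s / 2, s, s / 2] : Fin 4 → ℝ) 0) ^ 2 ≤ 1
      rw [Finset.sum_pair (by decide : (3 : Fin 4) ≠ 1), g0, g1, g3]
      nlinarith
    · show ∑ j ∈ ({0, 2} : Finset (Fin 4)),
        ((![0, s / 2, s, s / 2] : Fin 4 → ℝ) j - (![0, s / 2, s, s / 2] : Fin 4 → ℝ) 1) ^ 2 ≤ 1
      rw [Finset.sum_pair (by decide : (0 : Fin 4) ≠ 2), g0, g1, g2]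
      nlinarith
    · show ∑ j ∈ ({1, 3} : Finset (Fin 4)),
        ((![0, s / 2, s, s / 2] : Fin 4 → ℝ) j - (![0, s / 2, s, s / 2] : Fin 4 → ℝ) 2) ^ 2 ≤ 1
      rw [Finset.sum_pair (by decide : (1 : Fin 4) ≠ 3), g1, g2, g3]
      nlinarith
    · show ∑ j ∈ ({2, 0} : Finset (Fin 4)),
        ((![0, s / 2, s, s / 2] : Fin 4 → ℝ) j - (![0, s / 2, s, s / 2] : Fin 4 → ℝ) 3) ^ 2 ≤ 1
      rw [Finset.sum_pair (by decide : (2 : Fin 4) ≠ 0), g0, g2, g3]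
      nlinarith
  · rw [show (![0, s / 2, s, s / 2] : Fin 4 → ℝ) 2 = s from rfl,
      show (![0, s / 2, s, s / 2] : Fin 4 → ℝ) 0 = 0 from rfl, sub_zero,
      abs_of_nonneg (Real.sqrt_nonneg 2)]

/-- On the 4-cycle `x₁ - x₂ - x₃ - x₄ - x₁`, the Connes distance between the opposite
vertices `x₁` and `x₃` equals `√2`, which is strictly smaller than their graph distance `2`. -/
theorem stmt_16 :
    distC (SimpleGraph.cycleGraph 4) (0 : Fin 4) (2 : Fin 4) = Real.sqrt 2 ∧
      (SimpleGraph.cycleGraph 4).dist (0 : Fin 4) (2 : Fin 4) = 2 ∧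
      Real.sqrt 2 < ((SimpleGraph.cycleGraph 4).dist (0 : Fin 4) (2 : Fin 4) : ℝ) := by
  have hbdd : ∀ r ∈ {r : ℝ | ∃ f : Fin 4 → ℝ,
      Admissible (SimpleGraph.cycleGraph 4) f ∧ r = |f 2 - f 0|}, r ≤ Real.sqrt 2 := by
    rintro r ⟨f, hf, rfl⟩
    exact bound_aux f hf
  have hdist : (SimpleGraph.cycleGraph 4).dist (0 : Fin 4) (2 : Fin 4) = 2 := by
    have hadj01 : (SimpleGraph.cycleGraph 4).Adj 0 1 := by decide
    have hadj12 : (SimpleGraph.cycleGraph 4).Adj 1 2 := by decide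
    have hle : (SimpleGraph.cycleGraph 4).dist 0 2 ≤ 2 := by
      have := SimpleGraph.dist_le
        (SimpleGraph.Walk.cons hadj01 (SimpleGraph.Walk.cons hadj12 SimpleGraph.Walk.nil))
      simpa [SimpleGraph.Walk.length_cons, SimpleGraph.Walk.length_nil] using this
    have hpos := SimpleGraph.Reachable.pos_dist_of_ne
      ⟨SimpleGraph.Walk.cons hadj01 (SimpleGraph.Walk.cons hadj12 SimpleGraph.Walk.nil)⟩
      (by decide : (0 : Fin 4) ≠ 2)
    have hne1 : (SimpleGraph.cycleGraph 4).dist 0 2 ≠ 1 := by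
      intro h
      have := SimpleGraph.dist_eq_one_iff_adj.mp h
      exact absurd this (by decide)
    omega
  refine ⟨?_, hdist, ?_⟩
  · exact le_antisymm (csSup_le ⟨_, mem_aux⟩ hbdd) (le_csSup ⟨_, hbdd⟩ mem_aux)
  · rw [hdist]
    have h2 : Real.sqrt 2 < Real.sqrt 4 := by
      apply Real.sqrt_lt_sqrt <;> norm_num
    rw [show (4:ℝ) = 2^2 by norm_num, Real.sqrt_sq (by norm_num : (0:ℝ) ≤ 2)] at h2
    simpa using h2
end

section
/- Let G be the undirected one-dimensional lattice: the simple graph on vertex set ℤ in which i and j are adjacent if and only if |i − j| = 1. Then for every natural number n ≥ 1 the Connes distance between 0 and n is given by dist_C(0, n) = √(n²/2) if n is even, and dist_C(0, n) = √((n² + 1)/2) if n is odd. Equivalently, dist_C(0,n) = √⌊n²/2⌋ for n even and √(⌊n²/2⌋ + 1) for n odd. -/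
/-!
Write `d i = f (i + 1) - f i`; admissibility says exactly that every pair `(d i, d (i + 1))` of
consecutive increments lies in the unit disc, and `f n - f 0 = d 0 + ⋯ + d (n - 1)`.

For `n = 2k` the increments split into `k` disjoint consecutive pairs, each summing to at most `√2`.
For `n = 2k + 1` put `s = √((k + 1)² + k²)`. By Cauchy–Schwarz,
`(k + 1) d (2j) + k d (2j + 1) ≤ s` and `k d (2j + 1) + (k + 1) d (2j + 2) ≤ s`; adding the first
with weight `k - j` and the second with weight `j + 1` over `j < k` gives
`k (k + 1) (d 0 + ⋯ + d (2k)) ≤ k (k + 1) s`.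

Both bounds are attained by the functions whose increments alternate between two values `a`, `b`
with `a² + b² = 1`: `a = b = 1/√2` for `n` even, `a = (k + 1)/s`, `b = k/s` for `n` odd.
-/

open Real

def LatticeAdmissible (f : ℤ → ℝ) : Prop :=
  ∀ i : ℤ, (f (i + 1) - f i) ^ 2 + (f (i - 1) - f i) ^ 2 ≤ 1

lemma mul_add_mul_le_sqrt {x y : ℝ} (a b : ℝ) (h : x ^ 2 + y ^ 2 ≤ 1) :
    a * x + b * y ≤ √(a ^ 2 + b ^ 2) := by
  have hscaled := mul_le_mul_of_nonneg_left h (by positivity : 0 ≤ a ^ 2 + b ^ 2)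
  have hsq : (a * x + b * y) ^ 2 ≤ a ^ 2 + b ^ 2 := by
    nlinarith [sq_nonneg (a * y - b * x)]
  exact (le_abs_self _).trans (abs_le_sqrt hsq)

namespace LatticeAdmissible

variable {f : ℤ → ℝ}

lemma zero : LatticeAdmissible 0 := fun i => by simp

lemma neg (hf : LatticeAdmissible f) : LatticeAdmissible (-f) := fun i => by
  simpa only [Pi.neg_apply, neg_sub_neg, ← neg_sub (f i), neg_sq] using hf i

lemma sq_add_sq_le (hf : LatticeAdmissible f) (i : ℤ) :
    (f (i + 1) - f i) ^ 2 + (f (i + 1 + 1) - f (i + 1)) ^ 2 ≤ 1 := by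
  have h := hf (i + 1)
  rw [add_sub_cancel_right, ← neg_sub (f (i + 1)), neg_sq] at h
  linarith

lemma sub_le_mul_sqrt_two (hf : LatticeAdmissible f) (k : ℕ) :
    f (2 * k) - f 0 ≤ k * √2 := by
  induction k with
  | zero => simp
  | succ k ih =>
    have hpair := mul_add_mul_le_sqrt 1 1 (hf.sq_add_sq_le (2 * k))
    rw [show 2 * ((k + 1 : ℕ) : ℤ) = 2 * k + 1 + 1 by push_cast; ring]
    norm_num at hpair
    push_cast
    linarith

/-- The weighted sum of the pair bounds over the pairs starting below `2m`, divided by `k + 1`. -/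
lemma weighted_sub_le {k m : ℕ} (hf : LatticeAdmissible f) (hm : m ≤ k) :
    k * (f (2 * m) - f 0) + m * (f (2 * m + 1) - f (2 * m)) ≤ m * √((k + 1) ^ 2 + k ^ 2) := by
  induction m with
  | zero => simp
  | succ m ih =>
    have ih := ih (by omega)
    have hk : (m : ℝ) + 1 ≤ k := by exact_mod_cast hm
    have heven := mul_add_mul_le_sqrt (k + 1) k (hf.sq_add_sq_le (2 * m))
    have hodd := mul_add_mul_le_sqrt k (k + 1) (hf.sq_add_sq_le (2 * m + 1))
    rw [add_comm (_ ^ 2)] at hodd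
    rw [show 2 * ((m + 1 : ℕ) : ℤ) = 2 * m + 1 + 1 by push_cast; ring]
    refine le_of_mul_le_mul_left ?_ (by positivity : (0 : ℝ) < k + 1)
    push_cast
    linarith [mul_le_mul_of_nonneg_left ih (by positivity : (0 : ℝ) ≤ k + 1),
      mul_le_mul_of_nonneg_left heven (by linarith : (0 : ℝ) ≤ k - m),
      mul_le_mul_of_nonneg_left hodd (by positivity : (0 : ℝ) ≤ m + 1)]

lemma sub_le_sqrt (hf : LatticeAdmissible f) (k : ℕ) :
    f (2 * k + 1) - f 0 ≤ √((k + 1) ^ 2 + k ^ 2) := by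
  rcases k.eq_zero_or_pos with rfl | hk
  · simpa using mul_add_mul_le_sqrt 1 0 (hf.sq_add_sq_le 0)
  · have h := hf.weighted_sub_le (le_refl k)
    refine le_of_mul_le_mul_left ?_ (by exact_mod_cast hk : (0 : ℝ) < k)
    linarith

end LatticeAdmissible

-- Its increments alternate `a` (from even `i`) and `b` (from odd `i`): `ℤ`-division rounds down.
noncomputable def zigzag (a b : ℝ) (i : ℤ) : ℝ :=
  a * ((i + 1) / 2 : ℤ) + b * (i / 2 : ℤ)

lemma zigzag_two_mul (a b : ℝ) (m : ℤ) : zigzag a b (2 * m) = m * (a + b) := by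
  simp only [zigzag]
  rw [show (2 * m + 1) / 2 = m by omega, show 2 * m / 2 = m by omega]
  ring

lemma zigzag_two_mul_add_one (a b : ℝ) (m : ℤ) :
    zigzag a b (2 * m + 1) = (m + 1) * a + m * b := by
  simp only [zigzag]
  rw [show (2 * m + 1 + 1) / 2 = m + 1 by omega, show (2 * m + 1) / 2 = m by omega]
  push_cast
  ring

lemma latticeAdmissible_zigzag {a b : ℝ} (h : a ^ 2 + b ^ 2 ≤ 1) :
    LatticeAdmissible (zigzag a b) := by
  intro i
  rcases Int.even_or_odd' i with ⟨m, rfl | rfl⟩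
  · rw [show 2 * m - 1 = 2 * (m - 1) + 1 by ring, zigzag_two_mul, zigzag_two_mul_add_one,
      zigzag_two_mul_add_one]
    calc _ = a ^ 2 + b ^ 2 := by push_cast; ring
      _ ≤ 1 := h
  · rw [show 2 * m + 1 + 1 = 2 * (m + 1) by ring, add_sub_cancel_right, zigzag_two_mul,
      zigzag_two_mul, zigzag_two_mul_add_one]
    calc _ = a ^ 2 + b ^ 2 := by push_cast; ring
      _ ≤ 1 := h

lemma isGreatest_abs_sub {m : ℤ} {B : ℝ} {f : ℤ → ℝ} (hf : LatticeAdmissible f)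
    (hfB : f m - f 0 = B) (hB : ∀ g, LatticeAdmissible g → g m - g 0 ≤ B) :
    IsGreatest {r | ∃ g, LatticeAdmissible g ∧ r = |g m - g 0|} B := by
  have hB_nonneg : 0 ≤ B := by simpa using hB 0 LatticeAdmissible.zero
  refine ⟨⟨f, hf, by rw [hfB, abs_of_nonneg hB_nonneg]⟩, ?_⟩
  rintro _ ⟨g, hg, rfl⟩
  exact abs_sub_le_iff.2 ⟨hB g hg, by simpa only [Pi.neg_apply, neg_sub_neg] using hB (-g) hg.neg⟩

theorem stmt_17_general (n : ℕ) :
    sSup {r : ℝ | ∃ f : ℤ → ℝ,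
        (∀ i : ℤ, (f (i + 1) - f i) ^ 2 + (f (i - 1) - f i) ^ 2 ≤ 1) ∧
        r = |f (n : ℤ) - f 0|} =
      if Even n then Real.sqrt ((n : ℝ) ^ 2 / 2)
      else Real.sqrt (((n : ℝ) ^ 2 + 1) / 2) := by
  refine IsGreatest.csSup_eq ?_
  obtain ⟨k, rfl | rfl⟩ := n.even_or_odd'
  · have hval : √(((2 * k : ℕ) : ℝ) ^ 2 / 2) = k * √2 := by
      rw [show ((2 * k : ℕ) : ℝ) ^ 2 / 2 = k ^ 2 * 2 by push_cast; ring, sqrt_mul (by positivity),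
        sqrt_sq (by positivity)]
    have hsq : (√2 / 2) ^ 2 + (√2 / 2) ^ 2 ≤ 1 := by
      rw [div_pow, sq_sqrt zero_le_two]; norm_num
    rw [if_pos (even_two_mul k), hval, Nat.cast_mul, Nat.cast_ofNat]
    refine isGreatest_abs_sub (latticeAdmissible_zigzag hsq) ?_ fun g hg ↦ hg.sub_le_mul_sqrt_two k
    rw [zigzag_two_mul, show (0 : ℤ) = 2 * 0 by rfl, zigzag_two_mul]
    push_cast
    ring
  · set s := √(((k : ℝ) + 1) ^ 2 + k ^ 2)
    have hs : 0 < s := by positivity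
    have hs_sq : s ^ 2 = (k + 1) ^ 2 + k ^ 2 := sq_sqrt (by positivity)
    have hval : √((((2 * k + 1 : ℕ) : ℝ) ^ 2 + 1) / 2) = s := by
      congr 1; push_cast; ring
    have hsq : ((k + 1) / s) ^ 2 + (k / s) ^ 2 ≤ 1 := by
      rw [div_pow, div_pow, ← add_div, ← hs_sq, div_self (by positivity)]
    rw [if_neg (Nat.not_even_two_mul_add_one k), hval]
    push_cast
    refine isGreatest_abs_sub (latticeAdmissible_zigzag hsq) ?_ fun g hg ↦ hg.sub_le_sqrt k
    rw [zigzag_two_mul_add_one, show (0 : ℤ) = 2 * 0 by rfl, zigzag_two_mul]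
    push_cast
    field_simp
    linear_combination -hs_sq

/-- On the undirected one-dimensional lattice `ℤ` (where `i ~ j` iff `|i - j| = 1`, so a
function `f : ℤ → ℝ` is admissible iff `(f (i+1) - f i)² + (f (i-1) - f i)² ≤ 1` for all `i`),
the Connes distance between `0` and `n ≥ 1` is `√(n²/2)` for `n` even and `√((n²+1)/2)` for
`n` odd. -/
theorem stmt_17 (n : ℕ) (hn : 1 ≤ n) :
    sSup {r : ℝ | ∃ f : ℤ → ℝ,
        (∀ i : ℤ, (f (i + 1) - f i) ^ 2 + (f (i - 1) - f i) ^ 2 ≤ 1) ∧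
        r = |f (n : ℤ) - f 0|} =
      if Even n then Real.sqrt ((n : ℝ) ^ 2 / 2)
      else Real.sqrt (((n : ℝ) ^ 2 + 1) / 2) :=
  stmt_17_general n
end

section
/- Consider the directed lattice ℤ²_d: the directed graph on vertex set ℤ × ℤ with directed edges from (i,j) to (i+1,j) and from (i,j) to (i,j+1), so every vertex has out-degree 2. Call f : ℤ × ℤ → ℝ admissible if for every vertex (i,j), (f(i+1,j) − f(i,j))² + (f(i,j+1) − f(i,j))² ≤ 1, and let dist_C(p, q) be the supremum of |f(q) − f(p)| over admissible f. Then for every integer x ≥ 1 the Connes distance along the x-axis equals the graph distance: dist_C((0,0), (x,0)) = x. -/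
/-- On the directed lattice `ℤ²_d` (directed edges from `(i,j)` to `(i+1,j)` and `(i,j+1)`,
so `f` is admissible iff `(f (i+1,j) - f (i,j))² + (f (i,j+1) - f (i,j))² ≤ 1` everywhere),
the Connes distance along the `x`-axis equals the graph distance:
`dist_C((0,0),(x,0)) = x` for every integer `x ≥ 1`. -/
theorem stmt_18 (x : ℤ) (hx : 1 ≤ x) :
    sSup {r : ℝ | ∃ f : ℤ × ℤ → ℝ,
        (∀ i j : ℤ,
          (f (i + 1, j) - f (i, j)) ^ 2 + (f (i, j + 1) - f (i, j)) ^ 2 ≤ 1) ∧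
        r = |f (x, 0) - f (0, 0)|} = (x : ℝ) := by
  have hub : ∀ r ∈ {r : ℝ | ∃ f : ℤ × ℤ → ℝ,
        (∀ i j : ℤ,
          (f (i + 1, j) - f (i, j)) ^ 2 + (f (i, j + 1) - f (i, j)) ^ 2 ≤ 1) ∧
        r = |f (x, 0) - f (0, 0)|}, r ≤ (x : ℝ) := by
    rintro r ⟨f, hf, rfl⟩
    have key : ∀ n : ℕ, |f ((n : ℤ), 0) - f (0, 0)| ≤ (n : ℝ) := by
      intro n
      induction n with
      | zero => simp
      | succ n ih =>
        have h1 := hf n 0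
        have hsq : (f ((n : ℤ) + 1, 0) - f ((n : ℤ), 0)) ^ 2 ≤ 1 := by
          nlinarith [sq_nonneg (f ((n : ℤ), 0 + 1) - f ((n : ℤ), 0))]
        have habs : |f ((n : ℤ) + 1, 0) - f ((n : ℤ), 0)| ≤ 1 := by
          nlinarith [sq_abs (f ((n : ℤ) + 1, 0) - f ((n : ℤ), 0)),
            abs_nonneg (f ((n : ℤ) + 1, 0) - f ((n : ℤ), 0))]
        calc |f ((((n + 1 : ℕ)) : ℤ), 0) - f (0, 0)|
            ≤ |f ((n : ℤ) + 1, 0) - f ((n : ℤ), 0)| + |f ((n : ℤ), 0) - f (0, 0)| := by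
              push_cast
              exact abs_sub_le _ _ _
          _ ≤ 1 + n := add_le_add habs ih
          _ = ((n + 1 : ℕ) : ℝ) := by push_cast; ring
    have hx0 : x = (x.toNat : ℤ) := (Int.toNat_of_nonneg (by linarith)).symm
    calc |f (x, 0) - f (0, 0)| = |f ((x.toNat : ℤ), 0) - f (0, 0)| := by rw [← hx0]
      _ ≤ (x.toNat : ℝ) := key x.toNat
      _ = (x : ℝ) := by exact_mod_cast hx0.symm
  have hmem : (x : ℝ) ∈ {r : ℝ | ∃ f : ℤ × ℤ → ℝ,
        (∀ i j : ℤ,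
          (f (i + 1, j) - f (i, j)) ^ 2 + (f (i, j + 1) - f (i, j)) ^ 2 ≤ 1) ∧
        r = |f (x, 0) - f (0, 0)|} := by
    refine ⟨fun p => (p.1 : ℝ), fun i j => by push_cast; norm_num, ?_⟩
    simp only
    rw [abs_of_nonneg (by push_cast; simp; linarith)]
    push_cast; ring
  exact le_antisymm (csSup_le ⟨_, hmem⟩ hub) (le_csSup ⟨_, hub⟩ hmem)
end

section
/- Consider the directed lattice ℤ²_d: the directed graph on vertex set ℤ × ℤ with directed edges from (i,j) to (i+1,j) and from (i,j) to (i,j+1). Call f : ℤ × ℤ → ℝ admissible if for every vertex (i,j), (f(i+1,j) − f(i,j))² + (f(i,j+1) − f(i,j))² ≤ 1, and let dist_C(p, q) be the supremum of |f(q) − f(p)| over admissible f. Then for all integers x, y ≥ 1 with x ≠ y one has the estimates √(x² + y²) ≤ dist_C((0,0), (x,y)) < x + y; in particular the Connes distance is strictly smaller than the canonical graph distance x + y and strictly larger than (x + y)/√2. -/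
private lemma chain_aux (g : ℕ → ℝ) : ∀ n : ℕ, (∀ k, k < n → |g (k+1) - g k| ≤ 1) →
    |g n - g 0| ≤ n := by
  intro n
  induction n with
  | zero => simp
  | succ m ih =>
    intro h
    have h1 := h m (by omega)
    have h2 := ih (fun k hk => h k (by omega))
    calc |g (m+1) - g 0| ≤ |g (m+1) - g m| + |g m - g 0| := abs_sub_le _ _ _
      _ ≤ 1 + m := add_le_add h1 h2
      _ = ((m+1 : ℕ) : ℝ) := by push_cast; ring

private lemma ub_aux (x y : ℤ) (hx : 1 ≤ x) (hy : 1 ≤ y) (f : ℤ × ℤ → ℝ)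
    (hf : ∀ i j : ℤ, (f (i + 1, j) - f (i, j)) ^ 2 + (f (i, j + 1) - f (i, j)) ^ 2 ≤ 1) :
    |f (x, y) - f (0, 0)| ≤ ((x:ℝ) + y - 1) + Real.sqrt (1/2) := by
  have hstepH : ∀ i j : ℤ, |f (i+1, j) - f (i, j)| ≤ 1 := by
    intro i j
    have h := hf i j
    have h2 : (f (i+1, j) - f (i, j))^2 ≤ 1 := by nlinarith [sq_nonneg (f (i, j+1) - f (i, j))]
    calc |f (i+1, j) - f (i, j)| = Real.sqrt ((f (i+1, j) - f (i, j))^2) := (Real.sqrt_sq_eq_abs _).symm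
      _ ≤ Real.sqrt 1 := Real.sqrt_le_sqrt h2
      _ = 1 := Real.sqrt_one
  have hstepV : ∀ i j : ℤ, |f (i, j+1) - f (i, j)| ≤ 1 := by
    intro i j
    have h := hf i j
    have h2 : (f (i, j+1) - f (i, j))^2 ≤ 1 := by nlinarith [sq_nonneg (f (i+1, j) - f (i, j))]
    calc |f (i, j+1) - f (i, j)| = Real.sqrt ((f (i, j+1) - f (i, j))^2) := (Real.sqrt_sq_eq_abs _).symm
      _ ≤ Real.sqrt 1 := Real.sqrt_le_sqrt h2
      _ = 1 := Real.sqrt_one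
  have h00 := hf 0 0
  simp only [zero_add] at h00
  have hcast : ∀ n : ℤ, 0 ≤ n → ((n.toNat : ℝ)) = (n : ℝ) := by
    intro n hn
    have h := Int.toNat_of_nonneg hn
    exact_mod_cast congrArg (fun z : ℤ => (z : ℝ)) h
  have hsq : ∀ d : ℝ, d^2 ≤ 1/2 → |d| ≤ Real.sqrt (1/2) := by
    intro d hd
    rw [← Real.sqrt_sq_eq_abs]
    exact Real.sqrt_le_sqrt hd
  rcases le_or_gt ((f (1, 0) - f (0, 0))^2) (1/2) with hc | hc
  · -- go right first
    have hfirst : |f (1, 0) - f (0, 0)| ≤ Real.sqrt (1/2) := hsq _ hc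
    -- horizontal from (1,0) to (x,0)
    have hH : |f (x, 0) - f (1, 0)| ≤ ((x:ℝ) - 1) := by
      have := chain_aux (fun k => f (1 + (k:ℤ), 0)) (x-1).toNat (by
        intro k hk
        have : (1 + ((k:ℤ)+1), (0:ℤ)) = ((1 + (k:ℤ)) + 1, (0:ℤ)) := by ring_nf
        push_cast
        rw [show (1:ℤ) + ((k:ℤ)+1) = (1 + (k:ℤ)) + 1 by ring]
        exact hstepH (1 + (k:ℤ)) 0)
      simp only [Nat.cast_zero, add_zero] at this
      rw [show (1 + (((x-1).toNat : ℤ)) : ℤ) = x by omega] at this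
      rw [hcast (x-1) (by omega)] at this
      push_cast at this ⊢
      linarith [this]
    -- vertical from (x,0) to (x,y)
    have hV : |f (x, y) - f (x, 0)| ≤ (y:ℝ) := by
      have := chain_aux (fun k => f (x, (k:ℤ))) y.toNat (by
        intro k hk
        push_cast
        exact hstepV x (k:ℤ))
      simp only [Nat.cast_zero] at this
      rw [show ((y.toNat : ℤ)) = y by omega] at this
      rw [hcast y (by omega)] at this
      exact this
    calc |f (x, y) - f (0, 0)|
        ≤ |f (x, y) - f (x, 0)| + |f (x, 0) - f (1, 0)| + |f (1, 0) - f (0, 0)| := by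
          have := abs_sub_le (f (x, y)) (f (x, 0)) (f (0, 0))
          have := abs_sub_le (f (x, 0)) (f (1, 0)) (f (0, 0))
          linarith
      _ ≤ (y:ℝ) + ((x:ℝ) - 1) + Real.sqrt (1/2) := by linarith
      _ = ((x:ℝ) + y - 1) + Real.sqrt (1/2) := by ring
  · -- go up first
    have hc2 : (f (0, 1) - f (0, 0))^2 ≤ 1/2 := by nlinarith
    have hfirst : |f (0, 1) - f (0, 0)| ≤ Real.sqrt (1/2) := hsq _ hc2
    have hV : |f (0, y) - f (0, 1)| ≤ ((y:ℝ) - 1) := by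
      have := chain_aux (fun k => f (0, 1 + (k:ℤ))) (y-1).toNat (by
        intro k hk
        push_cast
        rw [show (1:ℤ) + ((k:ℤ)+1) = (1 + (k:ℤ)) + 1 by ring]
        exact hstepV 0 (1 + (k:ℤ)))
      simp only [Nat.cast_zero, add_zero] at this
      rw [show (1 + (((y-1).toNat : ℤ)) : ℤ) = y by omega] at this
      rw [hcast (y-1) (by omega)] at this
      push_cast at this ⊢
      linarith [this]
    have hH : |f (x, y) - f (0, y)| ≤ (x:ℝ) := by
      have := chain_aux (fun k => f ((k:ℤ), y)) x.toNat (by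
        intro k hk
        push_cast
        exact hstepH (k:ℤ) y)
      simp only [Nat.cast_zero] at this
      rw [show ((x.toNat : ℤ)) = x by omega] at this
      rw [hcast x (by omega)] at this
      exact this
    calc |f (x, y) - f (0, 0)|
        ≤ |f (x, y) - f (0, y)| + |f (0, y) - f (0, 1)| + |f (0, 1) - f (0, 0)| := by
          have := abs_sub_le (f (x, y)) (f (0, y)) (f (0, 0))
          have := abs_sub_le (f (0, y)) (f (0, 1)) (f (0, 0))
          linarith
      _ ≤ (x:ℝ) + ((y:ℝ) - 1) + Real.sqrt (1/2) := by linarith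
      _ = ((x:ℝ) + y - 1) + Real.sqrt (1/2) := by ring

/-- On the directed lattice `ℤ²_d` (directed edges from `(i,j)` to `(i+1,j)` and `(i,j+1)`,
so `f` is admissible iff `(f (i+1,j) - f (i,j))² + (f (i,j+1) - f (i,j))² ≤ 1` everywhere),
for integers `x, y ≥ 1` with `x ≠ y` the Connes distance `dist_C((0,0),(x,y))` satisfies
`√(x² + y²) ≤ dist_C < x + y`; in particular it is strictly smaller than the canonical graph
distance `x + y` and strictly larger than `(x + y)/√2`. -/
theorem stmt_19 (x y : ℤ) (hx : 1 ≤ x) (hy : 1 ≤ y) (hxy : x ≠ y) :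
    Real.sqrt ((x : ℝ) ^ 2 + (y : ℝ) ^ 2) ≤
        sSup {r : ℝ | ∃ f : ℤ × ℤ → ℝ,
          (∀ i j : ℤ,
            (f (i + 1, j) - f (i, j)) ^ 2 + (f (i, j + 1) - f (i, j)) ^ 2 ≤ 1) ∧
          r = |f (x, y) - f (0, 0)|} ∧
      sSup {r : ℝ | ∃ f : ℤ × ℤ → ℝ,
          (∀ i j : ℤ,
            (f (i + 1, j) - f (i, j)) ^ 2 + (f (i, j + 1) - f (i, j)) ^ 2 ≤ 1) ∧
          r = |f (x, y) - f (0, 0)|} < (x : ℝ) + (y : ℝ) ∧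
      ((x : ℝ) + (y : ℝ)) / Real.sqrt 2 <
        sSup {r : ℝ | ∃ f : ℤ × ℤ → ℝ,
          (∀ i j : ℤ,
            (f (i + 1, j) - f (i, j)) ^ 2 + (f (i, j + 1) - f (i, j)) ^ 2 ≤ 1) ∧
          r = |f (x, y) - f (0, 0)|} := by
  set S := {r : ℝ | ∃ f : ℤ × ℤ → ℝ,
    (∀ i j : ℤ, (f (i + 1, j) - f (i, j)) ^ 2 + (f (i, j + 1) - f (i, j)) ^ 2 ≤ 1) ∧
    r = |f (x, y) - f (0, 0)|} with hS
  have hxR : (1:ℝ) ≤ (x:ℝ) := by exact_mod_cast hx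
  have hyR : (1:ℝ) ≤ (y:ℝ) := by exact_mod_cast hy
  set s := Real.sqrt ((x : ℝ) ^ 2 + (y : ℝ) ^ 2) with hs
  have hspos : 0 < s := Real.sqrt_pos.mpr (by nlinarith)
  have hssq : s^2 = (x:ℝ)^2 + (y:ℝ)^2 := Real.sq_sqrt (by nlinarith)
  have hC : ∀ r ∈ S, r ≤ ((x:ℝ) + y - 1) + Real.sqrt (1/2) := by
    rintro r ⟨f, hf, rfl⟩
    exact ub_aux x y hx hy f hf
  have hbdd : BddAbove S := ⟨_, hC⟩
  have hne : S.Nonempty := ⟨0, fun _ => 0, by intro i j; norm_num, by norm_num⟩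
  have hmem : s ∈ S := by
    refine ⟨fun p => ((x:ℝ) * p.1 + (y:ℝ) * p.2) / s, ?_, ?_⟩
    · intro i j
      simp only
      have h1 : ((x:ℝ) * ((i:ℝ)+1) + (y:ℝ) * j) / s - ((x:ℝ) * i + (y:ℝ) * j) / s
          = (x:ℝ)/s := by field_simp; ring
      have h2 : ((x:ℝ) * i + (y:ℝ) * ((j:ℝ)+1)) / s - ((x:ℝ) * i + (y:ℝ) * j) / s
          = (y:ℝ)/s := by field_simp; ring
      push_cast
      rw [h1, h2]
      have : ((x:ℝ)/s)^2 + ((y:ℝ)/s)^2 = 1 := by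
        field_simp
        linarith [hssq]
      linarith
    · simp only
      push_cast
      have h3 : ((x:ℝ) * x + (y:ℝ) * y) / s - ((x:ℝ) * 0 + (y:ℝ) * 0) / s = s := by
        field_simp
        nlinarith [hssq]
      rw [h3, abs_of_nonneg hspos.le]
  have h1 : s ≤ sSup S := le_csSup hbdd hmem
  have hsqrt_half : Real.sqrt (1/2) < 1 := by
    have h := Real.sq_sqrt (by norm_num : (0:ℝ) ≤ 1/2)
    nlinarith [Real.sqrt_nonneg (1/2 : ℝ)]
  have h2 : sSup S < (x:ℝ) + y := by
    calc sSup S ≤ ((x:ℝ) + y - 1) + Real.sqrt (1/2) := csSup_le hne hC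
      _ < (x:ℝ) + y := by linarith
  have h3 : ((x:ℝ) + y) / Real.sqrt 2 < s := by
    have h2pos : (0:ℝ) < Real.sqrt 2 := Real.sqrt_pos.mpr (by norm_num)
    have h2sq : (Real.sqrt 2)^2 = 2 := Real.sq_sqrt (by norm_num)
    have hxyne : (x:ℝ) ≠ (y:ℝ) := by exact_mod_cast hxy
    have hlt : (((x:ℝ) + y) / Real.sqrt 2)^2 < s^2 := by
      rw [div_pow, h2sq, hssq]
      have hne0 : (x:ℝ) - y ≠ 0 := sub_ne_zero.mpr hxyne
      have : ((x:ℝ) - y)^2 > 0 := lt_of_le_of_ne (sq_nonneg _) (Ne.symm (pow_ne_zero 2 hne0))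
      nlinarith
    have hnn : 0 ≤ ((x:ℝ) + y) / Real.sqrt 2 := by positivity
    nlinarith
  exact ⟨h1, h2, lt_of_lt_of_le h3 h1⟩
end
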